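/- arXiv:2210.07641 — 4 statements merged into one kernel-verified Lean document; each statement's English description precedes it below -/
import Mathlib

section
/- Let (X, 𝒜, m) be a measure space and let p, q be strictly positive probability densities with respect to m. Let u, v be measurable functions with ∫ u p dm = 0 and ∫ v p dm = 0, such that u·v is p·m-integrable, u is q·m-integrable, and v is p·m-integrable. Then the inner product of u and v in L²₀(p·m) is transported by the pair of dual transports: ∫ u v p dm = ∫ (u − ∫ u q dm) · ((p/q)·v) · q dm. -/
open MeasureTheory

/-- **Transport of the inner product by the dual pair of transports.**
For strictly positive probability densities `p`, `q` w.r.t. a base measure `m`,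
`u, v` with zero `p·m` mean, the `L²₀(p·m)` pairing of `u` and `v` equals the pairing,
under `q·m`, of the exponential transport `u - ∫ u q dm` of `u` from `p` to `q` with
the mixture transport `(p/q)·v` of `v` from `p` to `q`. -/
theorem inner_product_transport
    {X : Type*} [MeasurableSpace X] (m : Measure X)
    (p q u v : X → ℝ)
    (hp : Measurable p) (hq : Measurable q)
    (hp_pos : ∀ x, 0 < p x) (hq_pos : ∀ x, 0 < q x)
    (hp_prob : ∫ x, p x ∂m = 1) (hq_prob : ∫ x, q x ∂m = 1)
    (hu : Measurable u) (hv : Measurable v)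
    (hu_mean : ∫ x, u x * p x ∂m = 0)
    (hv_mean : ∫ x, v x * p x ∂m = 0)
    (huv_int : Integrable (fun x => u x * v x * p x) m)
    (hu_int : Integrable (fun x => u x * q x) m)
    (hv_int : Integrable (fun x => v x * p x) m) :
    ∫ x, u x * v x * p x ∂m
      = ∫ x, (u x - ∫ y, u y * q y ∂m) * ((p x / q x) * v x) * q x ∂m := by
  set c : ℝ := ∫ y, u y * q y ∂m
  have hcongr : ∀ x, (u x - c) * ((p x / q x) * v x) * q x
      = u x * v x * p x - c * (v x * p x) := by
    intro x
    have hq0 : q x ≠ 0 := (hq_pos x).ne'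
    field_simp
  calc ∫ x, u x * v x * p x ∂m
      = ∫ x, u x * v x * p x - c * (v x * p x) ∂m := by
        rw [integral_sub huv_int (hv_int.const_mul c), MeasureTheory.integral_const_mul, hv_mean,
          mul_zero, sub_zero]
    _ = ∫ x, (u x - c) * ((p x / q x) * v x) * q x ∂m := by
        exact integral_congr_ae (Filter.Eventually.of_forall fun x => (hcongr x).symm)
end

section
/- Let (X, 𝒜, m) be a measure space and let p, q, r be strictly positive probability densities with respect to m such that log(q/p), log(r/q) and log(r/p) are integrable with respect to both p·m and q·m. Define the exponential displacement s_p(q) = log(q/p) − ∫ log(q/p) p dm. Then the parallelogram law holds: s_p(q) + ( s_q(r) − ∫ s_q(r) p dm ) = s_p(r), where the middle term is the exponential transport of s_q(r) from q to p. -/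
open MeasureTheory

/-- The exponential displacement `s_p(q) = log(q/p) - ∫ log(q/p) p dm`. -/
noncomputable def expDisp {X : Type*} [MeasurableSpace X] (m : Measure X)
    (p q : X → ℝ) (x : X) : ℝ :=
  Real.log (q x / p x) - ∫ y, Real.log (q y / p y) * p y ∂m

/-- **Parallelogram law (axiom AF2) for the exponential displacement.**
`s_p(q) + (s_q(r) - ∫ s_q(r) p dm) = s_p(r)`, the middle term being the exponential
transport of `s_q(r)` from `q` to `p`. -/
theorem exponential_displacement_parallelogram
    {X : Type*} [MeasurableSpace X] (m : Measure X)
    (p q r : X → ℝ)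
    (hp : Measurable p) (hq : Measurable q) (hr : Measurable r)
    (hp_pos : ∀ x, 0 < p x) (hq_pos : ∀ x, 0 < q x) (hr_pos : ∀ x, 0 < r x)
    (hp_prob : ∫ x, p x ∂m = 1) (hq_prob : ∫ x, q x ∂m = 1) (hr_prob : ∫ x, r x ∂m = 1)
    (hqp_p : Integrable (fun x => Real.log (q x / p x) * p x) m)
    (hqp_q : Integrable (fun x => Real.log (q x / p x) * q x) m)
    (hrq_p : Integrable (fun x => Real.log (r x / q x) * p x) m)
    (hrq_q : Integrable (fun x => Real.log (r x / q x) * q x) m)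
    (hrp_p : Integrable (fun x => Real.log (r x / p x) * p x) m)
    (hrp_q : Integrable (fun x => Real.log (r x / p x) * q x) m) :
    ∀ x, expDisp m p q x + (expDisp m q r x - ∫ y, expDisp m q r y * p y ∂m)
      = expDisp m p r x := by
  have hpint : Integrable p m := by
    by_contra h
    rw [integral_undef h] at hp_prob
    exact one_ne_zero hp_prob.symm
  intro x
  have hlog : ∀ y, Real.log (r y / p y) = Real.log (q y / p y) + Real.log (r y / q y) := by
    intro y
    have hpy := (hp_pos y).ne'
    have hqy := (hq_pos y).ne'
    rw [← Real.log_mul (div_ne_zero hqy hpy) (div_ne_zero (hr_pos y).ne' hqy)]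
    congr 1
    field_simp
  have hint : (∫ y, Real.log (r y / p y) * p y ∂m)
      = (∫ y, Real.log (q y / p y) * p y ∂m) + ∫ y, Real.log (r y / q y) * p y ∂m := by
    rw [← integral_add hqp_p hrq_p]
    congr 1
    ext y
    rw [hlog y]
    ring
  have hI : (∫ y, expDisp m q r y * p y ∂m)
      = (∫ y, Real.log (r y / q y) * p y ∂m) - ∫ y, Real.log (r y / q y) * q y ∂m := by
    have heq : (fun y => expDisp m q r y * p y)
        = fun y => Real.log (r y / q y) * p y - (∫ z, Real.log (r z / q z) * q z ∂m) * p y := by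
      ext y; simp only [expDisp]; ring
    rw [heq, integral_sub hrq_p (hpint.const_mul _), integral_const_mul, hp_prob, mul_one]
  rw [hI]
  simp only [expDisp]
  rw [hlog x, hint]
  ring
end

section
/- (Non-expansivity of the Ornstein–Uhlenbeck semigroup on Orlicz integrals) Let Φ : ℝ → ℝ be convex, let f ∈ C⁰_poly(ℝⁿ) with Φ∘f integrable with respect to γ, and let t ≥ 0. Then ∫ Φ( P_t f(x) ) dγ(x) ≤ ∫ Φ( f(x) ) dγ(x). -/
noncomputable section
open MeasureTheory Real

/-- The standard Gaussian probability measure on `ℝⁿ`, with density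
`(2π)^{-n/2} exp(-|x|²/2)` with respect to Lebesgue measure. -/
def stdGaussian (n : ℕ) : Measure (EuclideanSpace ℝ (Fin n)) :=
  volume.withDensity fun x => ENNReal.ofReal ((2 * π) ^ (-(n : ℝ) / 2) * Real.exp (-‖x‖ ^ 2 / 2))

/-- `C^k_poly(ℝⁿ)`: `k`-times continuously differentiable functions which, together with
all derivatives up to order `k`, are bounded by a polynomial. -/
def CPoly (n k : ℕ) (f : EuclideanSpace ℝ (Fin n) → ℝ) : Prop :=
  ContDiff ℝ k f ∧
    ∀ i ≤ k, ∃ C : ℝ, ∃ N : ℕ, ∀ x, ‖iteratedFDeriv ℝ i f x‖ ≤ C * (1 + ‖x‖) ^ N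

/-- The Ornstein–Uhlenbeck semigroup:
`P_t f(x) = ∫ f(e^{-t} x + √(1 - e^{-2t}) y) dγ(y)`. -/
def ouSemigroup (n : ℕ) (t : ℝ) (f : EuclideanSpace ℝ (Fin n) → ℝ)
    (x : EuclideanSpace ℝ (Fin n)) : ℝ :=
  ∫ y, f (Real.exp (-t) • x + Real.sqrt (1 - Real.exp (-2 * t)) • y) ∂stdGaussian n

/-! Write `T(x, y) = e^{-t} x + √(1 - e^{-2t}) y`. The squares of the two coefficients sum to one,
so `T` pushes `γ ⊗ γ` forward to `γ` (compare characteristic functions). As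
`P_t f(x) = ∫ f(T(x, y)) dγ(y)`, Jensen's inequality in `y` followed by Fubini gives
`∫ Φ(P_t f) dγ ≤ ∫ Φ(f ∘ T) d(γ ⊗ γ) = ∫ Φ(f) dγ`. The function `Φ(P_t f)` is integrable because
it lies between an affine minorant of `Φ` evaluated at `P_t f` and the Jensen majorant. -/

open ProbabilityTheory (IsGaussian charFun_stdGaussian)

lemma map_smul_add_smul_prod_stdGaussian {E : Type*} [NormedAddCommGroup E]
    [InnerProductSpace ℝ E] [FiniteDimensional ℝ E] [MeasurableSpace E] [BorelSpace E]
    {c s : ℝ} (h : c ^ 2 + s ^ 2 = 1) :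
    ((ProbabilityTheory.stdGaussian E).prod (ProbabilityTheory.stdGaussian E)).map
      (fun p => c • p.1 + s • p.2) = ProbabilityTheory.stdGaussian E := by
  set γ := ProbabilityTheory.stdGaussian E
  have hconv : (γ.prod γ).map (fun p => c • p.1 + s • p.2) = γ.map (c • ·) ∗ γ.map (s • ·) := by
    rw [Measure.conv, Measure.map_prod_map _ _ (by fun_prop) (by fun_prop),
      Measure.map_map (by fun_prop) (by fun_prop)]
    rfl
  rw [hconv]
  refine Measure.ext_of_charFun (funext fun t => ?_)
  have hnorm : (‖c • t‖ : ℂ) ^ 2 + (‖s • t‖ : ℂ) ^ 2 = (‖t‖ : ℂ) ^ 2 := by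
    norm_cast
    rw [norm_smul, norm_smul, mul_pow, mul_pow, Real.norm_eq_abs, Real.norm_eq_abs, sq_abs, sq_abs]
    linear_combination ‖t‖ ^ 2 * h
  rw [charFun_conv, charFun_map_smul, charFun_map_smul, charFun_stdGaussian, charFun_stdGaussian,
    charFun_stdGaussian, ← Complex.exp_add, ← hnorm]
  ring_nf

lemma integrable_of_norm_le_mul_one_add_norm_pow {E F : Type*} [NormedAddCommGroup E]
    [NormedSpace ℝ E] [CompleteSpace E] [SecondCountableTopology E] [MeasurableSpace E]
    [BorelSpace E] [NormedAddCommGroup F] {μ : Measure E} [IsGaussian μ] {g : E → F}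
    (hg : AEStronglyMeasurable g μ) (C : ℝ) (N : ℕ) (hbound : ∀ x, ‖g x‖ ≤ C * (1 + ‖x‖) ^ N) :
    Integrable g μ := by
  have hid : MemLp (fun x : E => x) N μ := ProbabilityTheory.IsGaussian.memLp_id μ N (by simp)
  have hmom : MemLp (fun x : E => 1 + ‖x‖) N μ := (memLp_const (1 : ℝ)).add hid.norm
  refine Integrable.mono' (hmom.integrable_norm_pow'.const_mul C) hg (ae_of_all _ fun x => ?_)
  rw [Real.norm_eq_abs, abs_of_nonneg (by positivity)]
  exact hbound x

lemma integrable_stdGaussian_density (n : ℕ) :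
    Integrable fun x : EuclideanSpace ℝ (Fin n) =>
      (2 * π) ^ (-(n : ℝ) / 2) * rexp (-‖x‖ ^ 2 / 2) := by
  have h := (GaussianFourier.integrable_cexp_neg_mul_sq_norm_add
    (V := EuclideanSpace ℝ (Fin n)) (b := 1 / 2) (by norm_num) 0 0).norm.const_mul
      ((2 * π) ^ (-(n : ℝ) / 2))
  refine h.congr (ae_of_all _ fun x => ?_)
  have hexponent : -(1 / 2) * (‖x‖ : ℂ) ^ 2 = ((-‖x‖ ^ 2 / 2 : ℝ) : ℂ) := by push_cast; ring
  simp only [Complex.norm_exp, zero_mul, add_zero, hexponent, Complex.ofReal_re]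

lemma stdGaussian_eq_probabilityTheory_stdGaussian (n : ℕ) :
    stdGaussian n = ProbabilityTheory.stdGaussian (EuclideanSpace ℝ (Fin n)) := by
  have : IsFiniteMeasure (stdGaussian n) :=
    isFiniteMeasure_withDensity_ofReal (integrable_stdGaussian_density n).2
  refine Measure.ext_of_charFun (funext fun t => ?_)
  rw [charFun_stdGaussian, charFun_apply, stdGaussian, integral_withDensity_eq_integral_toReal_smul
    (by fun_prop) (ae_of_all _ fun _ => ENNReal.ofReal_lt_top)]
  have hintegrand : ∀ x : EuclideanSpace ℝ (Fin n),
      (ENNReal.ofReal ((2 * π) ^ (-(n : ℝ) / 2) * rexp (-‖x‖ ^ 2 / 2))).toReal •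
        Complex.exp (inner ℝ x t * Complex.I) =
      ((2 * π) ^ (-(n : ℝ) / 2) : ℝ) *
        Complex.exp (-(1 / 2) * ‖x‖ ^ 2 + Complex.I * inner ℝ t x) := by
    intro x
    rw [ENNReal.toReal_ofReal (by positivity), Complex.real_smul, Complex.ofReal_mul, mul_assoc,
      Complex.ofReal_exp, ← Complex.exp_add, real_inner_comm]
    push_cast
    ring_nf
  simp_rw [hintegrand]
  rw [integral_const_mul, GaussianFourier.integral_cexp_neg_mul_sq_norm_add (by norm_num),
    finrank_euclideanSpace_fin, ← mul_assoc]
  have hnormalize : (2 * π) ^ (-(n : ℝ) / 2) * (2 * π) ^ ((n : ℝ) / 2) = 1 := by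
    rw [← Real.rpow_add (by positivity), neg_div, neg_add_cancel, Real.rpow_zero]
  have hpow : ((π : ℂ) / (1 / 2)) ^ ((n : ℂ) / 2) = (((2 * π) ^ ((n : ℝ) / 2) : ℝ) : ℂ) := by
    rw [Complex.ofReal_cpow (by positivity)]
    push_cast
    ring_nf
  rw [hpow, ← Complex.ofReal_mul, hnormalize, Complex.ofReal_one, one_mul, Complex.I_sq]
  ring_nf

section ConvexIntegral

open Set

variable {α : Type*} [MeasurableSpace α] {μ : Measure α} {Φ : ℝ → ℝ}

lemma ConvexOn.integrable_comp_of_ae_le [IsFiniteMeasure μ] (hΦ : ConvexOn ℝ univ Φ)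
    {g h : α → ℝ} (hg : Integrable g μ) (hh : Integrable h μ) (hle : ∀ᵐ x ∂μ, Φ (g x) ≤ h x) :
    Integrable (fun x => Φ (g x)) μ := by
  have hΦc : ContinuousOn Φ univ := hΦ.continuousOn isOpen_univ
  obtain ⟨a, b, hab⟩ := hΦ.exists_affine_le_real isClosed_univ hΦc.lowerSemicontinuousOn
  exact integrable_of_le_of_le (continuousOn_univ.1 hΦc |>.comp_aestronglyMeasurable hg.1)
    (ae_of_all _ fun x => hab (g x) (mem_univ _)) hle ((hg.const_mul a).add (integrable_const b)) hh

theorem ConvexOn.integral_comp_integral_le_of_map_prod {β Z : Type*} [MeasurableSpace β]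
    [MeasurableSpace Z] [IsFiniteMeasure μ] {ν : Measure β} [IsProbabilityMeasure ν]
    {T : α × β → Z} (hT : Measurable T) (hΦ : ConvexOn ℝ univ Φ) {f : Z → ℝ}
    (hf : Integrable f ((μ.prod ν).map T))
    (hΦf : Integrable (fun z => Φ (f z)) ((μ.prod ν).map T)) :
    ∫ x, Φ (∫ y, f (T (x, y)) ∂ν) ∂μ ≤ ∫ z, Φ (f z) ∂((μ.prod ν).map T) := by
  have hfT : Integrable (fun p => f (T p)) (μ.prod ν) :=
    (integrable_map_measure hf.1 hT.aemeasurable).1 hf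
  have hΦfT : Integrable (fun p => Φ (f (T p))) (μ.prod ν) :=
    (integrable_map_measure hΦf.1 hT.aemeasurable).1 hΦf
  have hjensen : ∀ᵐ x ∂μ, Φ (∫ y, f (T (x, y)) ∂ν) ≤ ∫ y, Φ (f (T (x, y))) ∂ν := by
    filter_upwards [hfT.prod_right_ae, hΦfT.prod_right_ae] with x hfx hΦfx
    exact hΦ.map_integral_le (hΦ.continuousOn isOpen_univ) isClosed_univ
      (ae_of_all _ fun _ => mem_univ _) hfx hΦfx
  calc ∫ x, Φ (∫ y, f (T (x, y)) ∂ν) ∂μ ≤ ∫ x, ∫ y, Φ (f (T (x, y))) ∂ν ∂μ :=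
        integral_mono_ae (hΦ.integrable_comp_of_ae_le hfT.integral_prod_left
          hΦfT.integral_prod_left hjensen) hΦfT.integral_prod_left hjensen
    _ = ∫ p, Φ (f (T p)) ∂(μ.prod ν) := integral_integral hΦfT
    _ = ∫ z, Φ (f z) ∂((μ.prod ν).map T) := (integral_map hT.aemeasurable hΦf.1).symm

end ConvexIntegral

/-- **Non-expansivity of the Ornstein–Uhlenbeck semigroup on Orlicz integrals.**
For `Φ` convex, `f ∈ C⁰_poly(ℝⁿ)` with `Φ∘f` integrable w.r.t. `γ`, and `t ≥ 0`,
`∫ Φ(P_t f) dγ ≤ ∫ Φ(f) dγ`. -/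
theorem ou_nonexpansive (n : ℕ) (Φ : ℝ → ℝ) (hΦ : ConvexOn ℝ Set.univ Φ)
    (f : EuclideanSpace ℝ (Fin n) → ℝ) (hf : CPoly n 0 f)
    (hint : Integrable (fun x => Φ (f x)) (stdGaussian n))
    (t : ℝ) (ht : 0 ≤ t) :
    ∫ x, Φ (ouSemigroup n t f x) ∂stdGaussian n ≤ ∫ x, Φ (f x) ∂stdGaussian n := by
  have hγ := stdGaussian_eq_probabilityTheory_stdGaussian n
  have : IsGaussian (stdGaussian n) := hγ ▸ inferInstance
  have hcs : Real.exp (-t) ^ 2 + Real.sqrt (1 - Real.exp (-2 * t)) ^ 2 = 1 := by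
    rw [← Real.exp_nat_mul, Real.sq_sqrt (by simpa using ht)]
    ring_nf
  have hmap := map_smul_add_smul_prod_stdGaussian (E := EuclideanSpace ℝ (Fin n)) hcs
  rw [← hγ] at hmap
  obtain ⟨C, N, hbound⟩ := hf.2 0 le_rfl
  have hfint : Integrable f (stdGaussian n) :=
    integrable_of_norm_le_mul_one_add_norm_pow hf.1.continuous.aestronglyMeasurable C N
      fun x => by simpa using hbound x
  have key := hΦ.integral_comp_integral_le_of_map_prod (by fun_prop)
    (hmap.symm ▸ hfint) (hmap.symm ▸ hint)
  rwa [hmap] at key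
end
end

section
/- (Exponential arc connectedness criterion) Let p : ℝⁿ → ℝ be measurable with p > 0 γ-almost everywhere, ∫ p dγ = 1, ∫ p² dγ < ∞, and ∫ p^{−1} dγ < ∞. Then ∫ p^t dγ < ∞ for all t ∈ [−1, 2]. Consequently the one-parameter exponential family through γ and p·γ, with densities proportional to p^t, is defined on an open interval containing [0, 1], i.e. p·γ and γ are connected by an open exponential arc. -/
noncomputable section
open MeasureTheory Real

/-- **Exponential arc connectedness criterion.** If `p > 0` a.e. is a probability density
w.r.t. `γ` with `∫ p² dγ < ∞` and `∫ p⁻¹ dγ < ∞`, then `∫ pᵗ dγ < ∞` for all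
`t ∈ [-1, 2]`; consequently the exponential family with densities proportional to `pᵗ` is
normalizable on the open interval `(-1, 2)` containing `[0, 1]`, i.e. `p·γ` and `γ` are
connected by an open exponential arc. -/
theorem exponential_arc_criterion (n : ℕ)
    (p : EuclideanSpace ℝ (Fin n) → ℝ) (hp_meas : Measurable p)
    (hp_pos : ∀ᵐ x ∂stdGaussian n, 0 < p x)
    (hp_prob : ∫ x, p x ∂stdGaussian n = 1)
    (hp_sq : Integrable (fun x => p x ^ 2) (stdGaussian n))
    (hp_inv : Integrable (fun x => (p x)⁻¹) (stdGaussian n)) :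
    (∀ t ∈ Set.Icc (-1 : ℝ) 2, Integrable (fun x => p x ^ t) (stdGaussian n)) ∧
    ∀ t ∈ Set.Ioo (-1 : ℝ) 2,
      Integrable (fun x => p x ^ t) (stdGaussian n) ∧
        0 < ∫ x, p x ^ t ∂stdGaussian n := by

  have key : ∀ t ∈ Set.Icc (-1 : ℝ) 2, Integrable (fun x => p x ^ t) (stdGaussian n) := by
    intro t ht
    obtain ⟨ht1, ht2⟩ := ht
    have hbound : Integrable (fun x => p x ^ 2 + (p x)⁻¹) (stdGaussian n) := hp_sq.add hp_inv
    refine hbound.mono ?_ ?_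
    · refine (((Real.measurable_log.comp hp_meas).mul_const t).exp.aestronglyMeasurable).congr ?_
      filter_upwards [hp_pos] with x hx
      exact (Real.rpow_def_of_pos hx t).symm
    · filter_upwards [hp_pos] with x hx
      have hnn : 0 ≤ p x ^ t := Real.rpow_nonneg hx.le t
      rw [Real.norm_of_nonneg hnn, Real.norm_of_nonneg
        (by positivity : (0:ℝ) ≤ p x ^ 2 + (p x)⁻¹)]
      rcases le_or_gt 1 (p x) with h1 | h1
      · have : p x ^ t ≤ p x ^ (2 : ℝ) :=
          Real.rpow_le_rpow_of_exponent_le h1 ht2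
        calc p x ^ t ≤ p x ^ (2 : ℝ) := this
          _ = p x ^ 2 := by rw [Real.rpow_two]
          _ ≤ p x ^ 2 + (p x)⁻¹ := le_add_of_nonneg_right (by positivity)
      · have : p x ^ t ≤ p x ^ (-1 : ℝ) :=
          Real.rpow_le_rpow_of_exponent_ge hx h1.le ht1
        calc p x ^ t ≤ p x ^ (-1 : ℝ) := this
          _ = (p x)⁻¹ := Real.rpow_neg_one _
          _ ≤ p x ^ 2 + (p x)⁻¹ := le_add_of_nonneg_left (by positivity)
  refine ⟨key, fun t ht => ?_⟩
  have hint := key t ⟨ht.1.le, ht.2.le⟩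
  refine ⟨hint, ?_⟩
  have hγ : stdGaussian n ≠ 0 := by
    intro h
    rw [h] at hp_prob
    simp at hp_prob
  have hnn : 0 ≤ᵐ[stdGaussian n] fun x => p x ^ t := by
    filter_upwards [hp_pos] with x hx using Real.rpow_nonneg hx.le t
  rw [integral_pos_iff_support_of_nonneg_ae hnn hint]
  have hsupp : ∀ᵐ x ∂stdGaussian n, x ∈ Function.support fun x => p x ^ t := by
    filter_upwards [hp_pos] with x hx
    exact (Real.rpow_pos_of_pos hx t).ne'
  by_contra hcon
  push_neg at hcon
  have h0 : stdGaussian n (Function.support fun x => p x ^ t) = 0 := le_antisymm hcon bot_le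
  have := ae_iff.mp hsupp
  have huniv : stdGaussian n Set.univ = 0 := by
    have : stdGaussian n Set.univ ≤
        stdGaussian n (Function.support fun x => p x ^ t) +
        stdGaussian n {x | ¬ x ∈ Function.support fun x => p x ^ t} := by
      refine le_trans (measure_mono ?_) (measure_union_le _ _)
      intro x _
      by_cases hx : x ∈ Function.support fun x => p x ^ t
      · exact Or.inl hx
      · exact Or.inr hx
    rw [h0, ae_iff.mp hsupp, add_zero] at this
    exact le_antisymm this bot_le
  exact hγ (Measure.measure_univ_eq_zero.mp huniv)
end
end
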